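/- Key summation identity for stationarity: for every real α with 0 < α < 1 and every configuration x : ZMod L → {0,1}, one has ∑_{x' ∈ B(x)} (α/(1−α))^{ ℓ(x',x) + #010(x') } = α^{#010(x)} / (1−α)^{ #1110(x) + #010(x) }. -/

import Mathlib

/-- The flux function `q(w,x,y,z;b)`. -/
def flux (w x y z b : ℤ) : ℤ :=
  if w = 1 ∧ x = 1 ∧ y = 1 ∧ z = 0 then b
  else if (w = 0 ∨ w = 1) ∧ x = 0 ∧ y = 1 ∧ z = 0 then 1
  else 0

/-- The stochastic 5-neighbor update `U(v,b)`. -/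
def upd (L : ℕ) (v b : ZMod L → ℤ) : ZMod L → ℤ := fun j =>
  v j + flux (v (j - 3)) (v (j - 2)) (v (j - 1)) (v j) (b j)
      - flux (v (j - 2)) (v (j - 1)) (v j) (v (j + 1)) (b (j + 1))

/-- A map `ZMod L → ℤ` is a configuration (resp. bit field) if all its values are 0 or 1. -/
def IsBin (L : ℕ) (x : ZMod L → ℤ) : Prop := ∀ j, x j = 0 ∨ x j = 1

/-- The number of occurrences of the pattern `w` in the configuration `x`. -/
def patCount (L : ℕ) (x : ZMod L → ℤ) (w : List ℤ) : ℕ :=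
  ((Finset.range L).filter fun j =>
    ∀ i < w.length, x ((j + i : ℕ) : ZMod L) = w.getD i 0).card

/-- `x'` is a one-step predecessor of `x`: `x'` belongs to `B(x)`. -/
def inB (L : ℕ) (x' x : ZMod L → ℤ) : Prop :=
  IsBin L x' ∧ ∃ b : ZMod L → ℤ, IsBin L b ∧ upd L x' b = x

/-- The finite set of all binary configurations (or bit fields) on `ZMod L`. -/
def cube (L : ℕ) [NeZero L] : Finset (ZMod L → ℤ) :=
  Fintype.piFinset fun _ : ZMod L => ({0, 1} : Finset ℤ)

/-- The one-step transition probability `f_α(x',x)`. -/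
noncomputable def transProb (L : ℕ) [NeZero L] (α : ℝ) (x' x : ZMod L → ℤ) : ℝ :=
  ∑ b ∈ cube L,
    (∏ j : ZMod L, α ^ (b j).toNat * (1 - α) ^ (1 - b j).toNat) *
      (if upd L x' b = x then 1 else 0)

/-- The weight `w_α(y) = α^{#010(y)} / (1-α)^{#1110(y)+#010(y)}`. -/
noncomputable def weight (L : ℕ) (α : ℝ) (y : ZMod L → ℤ) : ℝ :=
  α ^ patCount L y [0, 1, 0] /
    (1 - α) ^ (patCount L y [1, 1, 1, 0] + patCount L y [0, 1, 0])

/-- The number of 1110-patterns of x' whose rightmost particle has moved in x. -/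
def ell (L : ℕ) (x' x : ZMod L → ℤ) : ℕ :=
  ((Finset.range L).filter fun j =>
    x' (((j : ℕ) : ZMod L) - 3) = 1 ∧ x' (((j : ℕ) : ZMod L) - 2) = 1 ∧
      x' (((j : ℕ) : ZMod L) - 1) = 1 ∧ x' ((j : ℕ) : ZMod L) = 0 ∧
      x (((j : ℕ) : ZMod L) - 1) = 0).card

lemma flux_zero_or_one (w x y z b : ℤ) (hb : b = 0 ∨ b = 1) :
    flux w x y z b = 0 ∨ flux w x y z b = 1 := by
  unfold flux; split_ifs <;> tauto

lemma flux_one_right {w x y z b : ℤ} (h : flux w x y z b = 1) : y = 1 ∧ z = 0 := by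
  unfold flux at h; split_ifs at h with h1 h2 <;> first | tauto | omega

lemma flux_010 {w : ℤ} (x y z b : ℤ) (hw : w = 0 ∨ w = 1) (hx : x = 0) (hy : y = 1)
    (hz : z = 0) : flux w x y z b = 1 := by
  unfold flux; split_ifs with h1 h2 <;> omega

lemma flux_w0x1 {w x : ℤ} (y z b : ℤ) (hw : w = 0) (hx : x = 1) :
    flux w x y z b = 0 := by
  unfold flux; split_ifs with h1 h2 <;> omega

lemma flux_1110 {w x y z : ℤ} (b : ℤ) (hw : w = 1) (hx : x = 1) (hy : y = 1) (hz : z = 0) :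
    flux w x y z b = b := by
  unfold flux; split_ifs with h1 h2 <;> first | rfl | tauto

section Pred

variable {L : ℕ} [NeZero L]

/-- The predecessor configuration determined by the arrival set `S`. -/
def predc (L : ℕ) (x : ZMod L → ℤ) (S : Finset (ZMod L)) : ZMod L → ℤ :=
  fun j => if j ∈ S then 0 else if j + 1 ∈ S then 1 else x j

/-- Validity of an arrival set. -/
def ValidS (L : ℕ) (x : ZMod L → ℤ) (S : Finset (ZMod L)) : Prop :=
  (∀ p ∈ S, x (p - 1) = 0 ∧ x p = 1 ∧ ¬(x (p + 1) = 1 ∧ x (p + 2) = 0)) ∧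
  (∀ p : ZMod L, x (p - 1) = 0 → x p = 1 → x (p + 1) = 0 → p ∈ S)

/-- The arrival set determined by a predecessor. -/
def Sof (L : ℕ) [NeZero L] (x x' : ZMod L → ℤ) : Finset (ZMod L) :=
  Finset.univ.filter fun p => x p = 1 ∧ x' p = 0

lemma mem_Sof {x x' : ZMod L → ℤ} {p : ZMod L} :
    p ∈ Sof L x x' ↔ x p = 1 ∧ x' p = 0 := by
  simp [Sof]

/-- Characterization: every genuine predecessor comes from a valid arrival set. -/
lemma predecessor_charac (x x' b : ZMod L → ℤ) (hx' : IsBin L x')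
    (hb : IsBin L b) (hU : upd L x' b = x) :
    ValidS L x (Sof L x x') ∧ predc L x (Sof L x x') = x' := by
  set q : ZMod L → ℤ := fun j => flux (x' (j - 3)) (x' (j - 2)) (x' (j - 1)) (x' j) (b j)
    with hqdef
  have hXQ : ∀ j, x j = x' j + q j - q (j + 1) := by
    intro j
    have e1 : j + 1 - 3 = j - 2 := by ring
    have e2 : j + 1 - 2 = j - 1 := by ring
    have e3 : j + 1 - 1 = j := by ring
    rw [← hU]
    show upd L x' b j = x' j + q j - q (j + 1)
    simp only [upd, hqdef, e1, e2, e3]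
  have hq01 : ∀ j, q j = 0 ∨ q j = 1 := fun j => flux_zero_or_one _ _ _ _ _ (hb j)
  have hq1 : ∀ j, q j = 1 → x' (j - 1) = 1 ∧ x' j = 0 := fun j h => flux_one_right h
  -- membership in Sof iff a move arrived at p
  have hSq : ∀ p : ZMod L, (x p = 1 ∧ x' p = 0) ↔ q p = 1 := by
    intro p
    constructor
    · rintro ⟨h1, h0⟩
      have := hXQ p
      rcases hq01 p with h | h
      · rcases hq01 (p + 1) with h' | h' <;> omega
      · exact h
    · intro h
      have h0 := (hq1 p h).2
      have hq2 : q (p + 1) = 0 := by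
        rcases hq01 (p + 1) with h' | h'
        · exact h'
        · exfalso
          have := (hq1 (p + 1) h').1
          rw [add_sub_cancel_right] at this
          omega
      have := hXQ p
      omega
  constructor
  · constructor
    · -- condition C1
      intro p hp
      rw [mem_Sof] at hp
      have hqp : q p = 1 := (hSq p).1 hp
      have hx'p1 : x' (p - 1) = 1 := (hq1 p hqp).1
      have hx'p : x' p = 0 := (hq1 p hqp).2
      have hqm : q (p - 1) = 0 := by
        rcases hq01 (p - 1) with h | h
        · exact h
        · have := (hq1 (p - 1) h).2; omega
      have hxm : x (p - 1) = 0 := by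
        have h := hXQ (p - 1)
        rw [sub_add_cancel] at h
        omega
      refine ⟨hxm, hp.1, ?_⟩
      rintro ⟨h1, h2⟩
      -- x(p+1)=1, x(p+2)=0 : derive contradiction
      have hq1' : q (p + 1) = 0 := by
        rcases hq01 (p + 1) with h | h
        · exact h
        · have := (hq1 (p + 1) h).1
          rw [add_sub_cancel_right] at this
          omega
      have hA := hXQ (p + 1)
      rw [show p + 1 + 1 = p + 2 from by ring, hq1'] at hA
      obtain ⟨hx'1, hq2⟩ : x' (p + 1) = 1 ∧ q (p + 2) = 0 := by
        rcases hx' (p + 1) with h | h <;> rcases hq01 (p + 2) with h' | h' <;>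
          constructor <;> omega
      have hB := hXQ (p + 2)
      rw [show p + 2 + 1 = p + 3 from by ring, hq2] at hB
      have e1 : p + 2 - 3 = p - 1 := by ring
      have e2 : p + 2 - 2 = p := by ring
      have e3 : p + 2 - 1 = p + 1 := by ring
      rcases hq01 (p + 3) with h3 | h3
      · -- then x'(p+2)=0, so a 010 forces q(p+2)=1, contradiction
        have hx'2 : x' (p + 2) = 0 := by rcases hx' (p + 2) with h' | h' <;> omega
        have : q (p + 2) = 1 := by
          show flux (x' (p + 2 - 3)) (x' (p + 2 - 2)) (x' (p + 2 - 1)) (x' (p + 2)) (b (p + 2)) = 1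
          rw [e1, e2, e3]
          exact flux_010 _ _ _ _ (hx' (p - 1)) hx'p hx'1 hx'2
        omega
      · -- then x'(p+2)=1 and q(p+3)=1, but the pattern at p+3 is 0110
        have hx'2 : x' (p + 2) = 1 := by rcases hx' (p + 2) with h' | h' <;> omega
        have f1 : p + 3 - 3 = p := by ring
        have f2 : p + 3 - 2 = p + 1 := by ring
        have f3 : p + 3 - 1 = p + 2 := by ring
        have : q (p + 3) = 0 := by
          show flux (x' (p + 3 - 3)) (x' (p + 3 - 2)) (x' (p + 3 - 1)) (x' (p + 3)) (b (p + 3)) = 0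
          rw [f1, f2, f3]
          exact flux_w0x1 _ _ _ hx'p hx'1
        omega
    · -- condition C2 : isolated particles must move
      intro p h1 h2 h3
      rw [mem_Sof]
      rw [hSq]
      by_contra hqp'
      have hqp : q p = 0 := by rcases hq01 p with h | h; exact h; exact absurd h hqp'
      have hA := hXQ p
      rw [hqp] at hA
      obtain ⟨hx'p, hqp1⟩ : x' p = 1 ∧ q (p + 1) = 0 := by
        rcases hx' p with h | h <;> rcases hq01 (p + 1) with h' | h' <;>
          constructor <;> omega
      have hB := hXQ (p + 1)
      rw [show p + 1 + 1 = p + 2 from by ring, hqp1] at hB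
      have hC := hXQ (p - 1)
      rw [sub_add_cancel, hqp] at hC
      obtain ⟨hx'm, hqm⟩ : x' (p - 1) = 0 ∧ q (p - 1) = 0 := by
        rcases hx' (p - 1) with h | h <;> rcases hq01 (p - 1) with h' | h' <;>
          constructor <;> omega
      have e1 : p + 1 - 3 = p - 2 := by ring
      have e2 : p + 1 - 2 = p - 1 := by ring
      have e3 : p + 1 - 1 = p := by ring
      rcases hq01 (p + 2) with h4 | h4
      · -- x'(p+1) = 0 : pattern 010 at p+1 forces q(p+1)=1
        have hx'1 : x' (p + 1) = 0 := by rcases hx' (p + 1) with h' | h' <;> omega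
        have : q (p + 1) = 1 := by
          show flux (x' (p + 1 - 3)) (x' (p + 1 - 2)) (x' (p + 1 - 1)) (x' (p + 1)) (b (p + 1)) = 1
          rw [e1, e2, e3]
          exact flux_010 _ _ _ _ (hx' (p - 2)) hx'm hx'p hx'1
        omega
      · -- x'(p+1) = 1 and q(p+2)=1 : but the pattern at p+2 is 0,1,1,·
        have f1 : p + 2 - 3 = p - 1 := by ring
        have f2 : p + 2 - 2 = p := by ring
        have f3 : p + 2 - 1 = p + 1 := by ring
        have : q (p + 2) = 0 := by
          show flux (x' (p + 2 - 3)) (x' (p + 2 - 2)) (x' (p + 2 - 1)) (x' (p + 2)) (b (p + 2)) = 0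
          rw [f1, f2, f3]
          exact flux_w0x1 _ _ _ hx'm hx'p
        omega
  · -- predc recovers x'
    funext j
    show (if j ∈ Sof L x x' then 0 else if j + 1 ∈ Sof L x x' then 1 else x j) = x' j
    by_cases hj : j ∈ Sof L x x'
    · rw [if_pos hj]
      exact ((mem_Sof.1 hj).2).symm
    · rw [if_neg hj]
      by_cases hj1 : j + 1 ∈ Sof L x x'
      · rw [if_pos hj1]
        have hq : q (j + 1) = 1 := (hSq _).1 (mem_Sof.1 hj1)
        have := (hq1 _ hq).1
        rw [add_sub_cancel_right] at this
        omega
      · rw [if_neg hj1]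
        have hqj : q j = 0 := by
          rcases hq01 j with h | h
          · exact h
          · exfalso; exact hj (mem_Sof.2 ((hSq j).2 h))
        have hqj1 : q (j + 1) = 0 := by
          rcases hq01 (j + 1) with h | h
          · exact h
          · exfalso; exact hj1 (mem_Sof.2 ((hSq (j + 1)).2 h))
        have := hXQ j
        omega

end Pred

section Pred2

variable {L : ℕ} [NeZero L]

lemma ValidS.not_mem_sub {x : ZMod L → ℤ} {S : Finset (ZMod L)} (hS : ValidS L x S)
    {p : ZMod L} (hp : p ∈ S) : p - 1 ∉ S := by
  intro h
  have h1 := (hS.1 p hp).1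
  have h2 := (hS.1 (p - 1) h).2.1
  omega

lemma predc_isBin (x : ZMod L → ℤ) (hx : IsBin L x) (S : Finset (ZMod L)) :
    IsBin L (predc L x S) := by
  intro j
  unfold predc
  split_ifs <;> simp [hx j]

lemma predc_apply_mem {x : ZMod L → ℤ} {S : Finset (ZMod L)} {p : ZMod L} (hp : p ∈ S) :
    predc L x S p = 0 := by
  unfold predc; rw [if_pos hp]

lemma predc_apply_succ {x : ZMod L → ℤ} {S : Finset (ZMod L)} (hS : ValidS L x S)
    {p : ZMod L} (hp : p ∈ S) : predc L x S (p - 1) = 1 := by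
  unfold predc
  rw [if_neg (hS.not_mem_sub hp), sub_add_cancel, if_pos hp]

/-- If the site two left of an arrival is occupied in the predecessor, so is the third. -/
lemma predc_third {x : ZMod L → ℤ} {S : Finset (ZMod L)} (hx : IsBin L x)
    (hS : ValidS L x S) {p : ZMod L} (hp : p ∈ S) (h2 : predc L x S (p - 2) = 1) :
    predc L x S (p - 3) = 1 ∧ x (p - 2) = 1 := by
  obtain ⟨hSm, hSf⟩ := hS
  obtain ⟨hc1, hc2, hc3⟩ := hSm p hp
  have hm1 : p - 1 ∉ S := ValidS.not_mem_sub ⟨hSm, hSf⟩ hp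
  have hx2 : x (p - 2) = 1 ∧ p - 2 ∉ S := by
    by_cases h : p - 2 ∈ S
    · rw [predc_apply_mem h] at h2; omega
    · unfold predc at h2
      rw [if_neg h, show p - 2 + 1 = p - 1 from by ring, if_neg hm1] at h2
      exact ⟨h2, h⟩
  have hm3 : p - 3 ∉ S := by
    intro h
    have := (hSm (p - 3) h).2.2
    rw [show p - 3 + 1 = p - 2 from by ring, show p - 3 + 2 = p - 1 from by ring] at this
    exact this ⟨hx2.1, hc1⟩
  have hx3 : x (p - 3) = 1 := by
    rcases hx (p - 3) with h | h
    · exfalso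
      have := hSf (p - 2) (by rwa [show p - 2 - 1 = p - 3 from by ring]) hx2.1
        (by rwa [show p - 2 + 1 = p - 1 from by ring])
      exact hx2.2 this
    · exact h
  refine ⟨?_, hx2.1⟩
  unfold predc
  rw [if_neg hm3, show p - 3 + 1 = p - 2 from by ring, if_neg hx2.2]
  exact hx3

/-- The flux pattern of the reconstructed predecessor: a move happens exactly at `S`. -/
lemma predc_flux (x : ZMod L → ℤ) (hx : IsBin L x) (S : Finset (ZMod L))
    (hS : ValidS L x S) (j : ZMod L) :
    flux (predc L x S (j - 3)) (predc L x S (j - 2)) (predc L x S (j - 1))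
      (predc L x S j) (if j ∈ S then 1 else 0) = if j ∈ S then 1 else 0 := by
  set x' := predc L x S with hx'def
  have hbin : IsBin L x' := predc_isBin x hx S
  by_cases hj : j ∈ S
  · rw [if_pos hj]
    have h1 : x' (j - 1) = 1 := predc_apply_succ hS hj
    have h0 : x' j = 0 := predc_apply_mem hj
    rcases hbin (j - 2) with h2 | h2
    · exact flux_010 _ _ _ _ (hbin (j - 3)) h2 h1 h0
    · obtain ⟨h3, _⟩ := predc_third hx hS hj h2
      rw [flux_1110 _ h3 h2 h1 h0]
  · rw [if_neg hj]
    -- must show no move happens at j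
    rcases hbin j with h0 | h0
    · -- x' j = 0 : possible patterns; rule out 010
      rcases hbin (j - 1) with h1 | h1
      · -- x'(j-1) = 0 : flux is 0 since y ≠ 1... flux needs y=1
        unfold flux; split_ifs <;> omega
      · -- x'(j-1)=1, x' j = 0 : show x'(j-2) = 1 leads to first branch with b = 0, and
        -- x'(j-2) = 0 is impossible
        rcases hbin (j - 2) with h2 | h2
        · exfalso
          -- x'(j-2)=0, x'(j-1)=1, x' j=0 with j ∉ S : contradiction with validity
          have hxj : x j = 0 ∧ j + 1 ∉ S := by
            rw [hx'def] at h0; unfold predc at h0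
            rw [if_neg hj] at h0
            by_cases h : j + 1 ∈ S
            · rw [if_pos h] at h0; omega
            · rw [if_neg h] at h0; exact ⟨h0, h⟩
          have hxm : x (j - 1) = 1 ∧ j - 1 ∉ S := by
            rw [hx'def] at h1; unfold predc at h1
            by_cases h : j - 1 ∈ S
            · rw [if_pos h] at h1; omega
            · rw [if_neg h, sub_add_cancel] at h1
              rw [if_neg hj] at h1
              exact ⟨h1, h⟩
          by_cases h : j - 2 ∈ S
          · have := (hS.1 (j - 2) h).2.2
            rw [show j - 2 + 1 = j - 1 from by ring, show j - 2 + 2 = j from by ring] at this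
            exact this ⟨hxm.1, hxj.1⟩
          · have hx2 : x (j - 2) = 0 := by
              rw [hx'def] at h2; unfold predc at h2
              rw [if_neg h, show j - 2 + 1 = j - 1 from by ring, if_neg hxm.2] at h2
              exact h2
            exact hxm.2 (hS.2 (j - 1) (by rwa [show j - 1 - 1 = j - 2 from by ring]) hxm.1
              (by rw [sub_add_cancel]; exact hxj.1))
        · -- x'(j-2)=1 : only possible move is the 1110 pattern, but b = 0
          unfold flux; split_ifs <;> omega
    · -- x' j = 1 : no flux since z must be 0
      unfold flux; split_ifs <;> omega

/-- Reconstructed predecessors are genuine predecessors. -/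
lemma predc_upd (x : ZMod L → ℤ) (hx : IsBin L x) (S : Finset (ZMod L))
    (hS : ValidS L x S) :
    upd L (predc L x S) (fun j => if j ∈ S then 1 else 0) = x := by
  funext j
  have hq := predc_flux x hx S hS
  have e1 : j + 1 - 3 = j - 2 := by ring
  have e2 : j + 1 - 2 = j - 1 := by ring
  have e3 : j + 1 - 1 = j := by ring
  have h2 := hq (j + 1)
  rw [e1, e2, e3] at h2
  show predc L x S j + _ - _ = x j
  rw [hq j, h2]
  have hnot : ¬(j ∈ S ∧ j + 1 ∈ S) := by
    rintro ⟨h, h'⟩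
    have := (hS.1 j h).2.1
    have := (hS.1 (j + 1) h').1
    rw [add_sub_cancel_right] at this
    omega
  unfold predc
  by_cases hj : j ∈ S
  · rw [if_pos hj, if_pos hj, if_neg (fun h => hnot ⟨hj, h⟩)]
    have := (hS.1 j hj).2.1
    omega
  · rw [if_neg hj, if_neg hj]
    by_cases hj1 : j + 1 ∈ S
    · rw [if_pos hj1, if_pos hj1]
      have := (hS.1 (j + 1) hj1).1
      rw [add_sub_cancel_right] at this
      omega
    · rw [if_neg hj1, if_neg hj1]
      ring

lemma Sof_predc (x : ZMod L → ℤ) (hx : IsBin L x) (S : Finset (ZMod L))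
    (hS : ValidS L x S) : Sof L x (predc L x S) = S := by
  ext p
  rw [mem_Sof]
  constructor
  · rintro ⟨h1, h0⟩
    by_contra hp
    unfold predc at h0
    rw [if_neg hp] at h0
    by_cases h : p + 1 ∈ S
    · rw [if_pos h] at h0; omega
    · rw [if_neg h] at h0; omega
  · intro hp
    exact ⟨(hS.1 p hp).2.1, predc_apply_mem hp⟩

end Pred2

section Count

variable {L : ℕ} [NeZero L]

lemma card_filter_range_cast (P : ZMod L → Prop) [DecidablePred P] :
    ((Finset.range L).filter fun j => P ((j : ℕ) : ZMod L)).card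
      = (Finset.univ.filter P).card := by
  apply Finset.card_bij' (i := fun j _ => ((j : ℕ) : ZMod L)) (j := fun z _ => z.val)
  · intro a ha
    rw [Finset.mem_filter] at ha ⊢
    exact ⟨Finset.mem_univ _, ha.2⟩
  · intro z hz
    rw [Finset.mem_filter] at hz ⊢
    rw [Finset.mem_range]
    refine ⟨ZMod.val_lt z, ?_⟩
    rw [ZMod.natCast_rightInverse z]
    exact hz.2
  · intro a ha
    rw [Finset.mem_filter, Finset.mem_range] at ha
    exact ZMod.val_cast_of_lt ha.1
  · intro z hz
    exact ZMod.natCast_rightInverse z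

lemma patCount010 (y : ZMod L → ℤ) :
    patCount L y [0, 1, 0]
      = (Finset.univ.filter fun z : ZMod L =>
          y z = 0 ∧ y (z + 1) = 1 ∧ y (z + 2) = 0).card := by
  rw [← card_filter_range_cast
    (P := fun z : ZMod L => y z = 0 ∧ y (z + 1) = 1 ∧ y (z + 2) = 0)]
  unfold patCount
  congr 1
  apply Finset.filter_congr
  intro j _
  simp only [List.length_cons, List.length_nil]
  constructor
  · intro h
    refine ⟨?_, ?_, ?_⟩
    · have := h 0 (by norm_num); simpa using this
    · have := h 1 (by norm_num); rw [Nat.cast_add] at this; simpa using this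
    · have := h 2 (by norm_num); rw [Nat.cast_add] at this; simpa using this
  · rintro ⟨h0, h1, h2⟩ i hi
    interval_cases i <;> simp_all [Nat.cast_add]

lemma patCount1110 (y : ZMod L → ℤ) :
    patCount L y [1, 1, 1, 0]
      = (Finset.univ.filter fun z : ZMod L =>
          y z = 1 ∧ y (z + 1) = 1 ∧ y (z + 2) = 1 ∧ y (z + 3) = 0).card := by
  rw [← card_filter_range_cast
    (P := fun z : ZMod L => y z = 1 ∧ y (z + 1) = 1 ∧ y (z + 2) = 1 ∧ y (z + 3) = 0)]
  unfold patCount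
  congr 1
  apply Finset.filter_congr
  intro j _
  simp only [List.length_cons, List.length_nil]
  constructor
  · intro h
    refine ⟨?_, ?_, ?_, ?_⟩
    · have := h 0 (by norm_num); simpa using this
    · have := h 1 (by norm_num); rw [Nat.cast_add] at this; simpa using this
    · have := h 2 (by norm_num); rw [Nat.cast_add] at this; simpa using this
    · have := h 3 (by norm_num); rw [Nat.cast_add] at this; simpa using this
  · rintro ⟨h0, h1, h2, h3⟩ i hi
    interval_cases i <;> simp_all [Nat.cast_add]

lemma ell_eq (x' x : ZMod L → ℤ) :
    ell L x' x = (Finset.univ.filter fun z : ZMod L =>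
      x' (z - 3) = 1 ∧ x' (z - 2) = 1 ∧ x' (z - 1) = 1 ∧ x' z = 0 ∧ x (z - 1) = 0).card :=
  card_filter_range_cast
    (P := fun z : ZMod L =>
      x' (z - 3) = 1 ∧ x' (z - 2) = 1 ∧ x' (z - 1) = 1 ∧ x' z = 0 ∧ x (z - 1) = 0)

/-- Exponent identity: `ℓ + #010(x') = |S|`. -/
lemma ell_add_patCount (x : ZMod L → ℤ) (hx : IsBin L x) (S : Finset (ZMod L))
    (hS : ValidS L x S) :
    ell L (predc L x S) x + patCount L (predc L x S) [0, 1, 0] = S.card := by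
  set x' := predc L x S with hx'def
  have hbin : IsBin L x' := predc_isBin x hx S
  have e1 : ell L x' x = (S.filter fun p => x' (p - 2) = 1).card := by
    rw [ell_eq]
    congr 1
    ext p
    simp only [Finset.mem_filter, Finset.mem_univ, true_and]
    constructor
    · rintro ⟨h3, h2, h1, h0, hm⟩
      have hp : p ∈ S := by
        by_contra hp
        rw [hx'def] at h1; unfold predc at h1
        by_cases h : p - 1 ∈ S
        · rw [if_pos h] at h1; omega
        · rw [if_neg h, sub_add_cancel, if_neg hp] at h1; omega
      exact ⟨hp, h2⟩
    · rintro ⟨hp, h2⟩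
      obtain ⟨h3, -⟩ := predc_third hx hS hp h2
      exact ⟨h3, h2, predc_apply_succ hS hp, predc_apply_mem hp, (hS.1 p hp).1⟩
  have e2 : patCount L x' [0, 1, 0] = (S.filter fun p => x' (p - 2) = 0).card := by
    rw [patCount010]
    apply Finset.card_nbij' (i := fun z => z + 2) (j := fun p => p - 2)
    · intro z hz
      rw [Finset.mem_coe, Finset.mem_filter] at hz ⊢
      obtain ⟨-, h0, h1, h2⟩ := hz
      have hzS : z + 2 ∈ S := by
        by_contra hzS
        have hxz2 : x (z + 2) = 0 ∧ z + 3 ∉ S := by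
          rw [hx'def] at h2; unfold predc at h2
          rw [if_neg hzS] at h2
          by_cases h : z + 2 + 1 ∈ S
          · rw [if_pos h] at h2; omega
          · rw [if_neg h] at h2
            rw [show z + 2 + 1 = z + 3 from by ring] at h
            exact ⟨h2, h⟩
        have hxz1 : x (z + 1) = 1 ∧ z + 1 ∉ S := by
          rw [hx'def] at h1; unfold predc at h1
          by_cases h : z + 1 ∈ S
          · rw [if_pos h] at h1; omega
          · rw [if_neg h, show z + 1 + 1 = z + 2 from by ring, if_neg hzS] at h1
            exact ⟨h1, h⟩
        by_cases h : z ∈ S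
        · have := (hS.1 z h).2.2
          exact this ⟨hxz1.1, hxz2.1⟩
        · have hxz : x z = 0 := by
            rw [hx'def] at h0; unfold predc at h0
            rw [if_neg h, if_neg hxz1.2] at h0
            exact h0
          exact hxz1.2 (hS.2 (z + 1) (by rwa [add_sub_cancel_right]) hxz1.1
            (by rw [show z + 1 + 1 = z + 2 from by ring]; exact hxz2.1))
      refine ⟨hzS, ?_⟩
      rw [show z + 2 - 2 = z from by ring]
      exact h0
    · intro p hp
      rw [Finset.mem_coe, Finset.mem_filter] at hp ⊢
      obtain ⟨hp, h2⟩ := hp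
      refine ⟨Finset.mem_univ _, h2, ?_, ?_⟩
      · rw [show p - 2 + 1 = p - 1 from by ring]
        exact predc_apply_succ hS hp
      · rw [show p - 2 + 2 = p from by ring]
        exact predc_apply_mem hp
    · intro a _; dsimp only; ring
    · intro a _; dsimp only; ring
  have e3 := Finset.card_filter_add_card_filter_not
    (s := S) (p := fun p => x' (p - 2) = 1)
  have e4 : (S.filter fun p => x' (p - 2) = 0)
      = S.filter (fun p => ¬x' (p - 2) = 1) := by
    apply Finset.filter_congr
    intro p _
    rcases hbin (p - 2) with h | h <;> simp [h]
  rw [e4] at e2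
  omega

end Count

section Vsum

open scoped Classical

variable {L : ℕ} [NeZero L]

/-- The set of forced arrivals (isolated particles `010`, shifted). -/
def Mset (L : ℕ) [NeZero L] (x : ZMod L → ℤ) : Finset (ZMod L) :=
  Finset.univ.filter fun p => x (p - 1) = 0 ∧ x p = 1 ∧ x (p + 1) = 0

/-- The set of optional arrivals (left ends of blocks of length ≥ 3). -/
def Fset (L : ℕ) [NeZero L] (x : ZMod L → ℤ) : Finset (ZMod L) :=
  Finset.univ.filter fun p => x (p - 1) = 0 ∧ x p = 1 ∧ x (p + 1) = 1 ∧ x (p + 2) = 1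

lemma disjoint_Mset_Fset (x : ZMod L → ℤ) : Disjoint (Mset L x) (Fset L x) := by
  rw [Finset.disjoint_left]
  intro p hp hp'
  simp only [Mset, Fset, Finset.mem_filter] at hp hp'
  omega

lemma validS_iff (x : ZMod L → ℤ) (hx : IsBin L x) (S : Finset (ZMod L)) :
    ValidS L x S ↔ Mset L x ⊆ S ∧ S ⊆ Mset L x ∪ Fset L x := by
  constructor
  · rintro ⟨hC1, hC2⟩
    constructor
    · intro p hp
      simp only [Mset, Finset.mem_filter] at hp
      exact hC2 p hp.2.1 hp.2.2.1 hp.2.2.2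
    · intro p hp
      obtain ⟨h1, h2, h3⟩ := hC1 p hp
      rw [Finset.mem_union]
      simp only [Mset, Fset, Finset.mem_filter, Finset.mem_univ, true_and]
      rcases hx (p + 1) with h | h
      · exact Or.inl ⟨h1, h2, h⟩
      · rcases hx (p + 2) with h' | h'
        · exact absurd ⟨h, h'⟩ h3
        · exact Or.inr ⟨h1, h2, h, h'⟩
  · rintro ⟨hM, hMF⟩
    constructor
    · intro p hp
      have := hMF hp
      rw [Finset.mem_union] at this
      rcases this with h | h <;>
        simp only [Mset, Fset, Finset.mem_filter, Finset.mem_univ, true_and] at h <;>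
        exact ⟨h.1, h.2.1, by omega⟩
    · intro p h1 h2 h3
      apply hM
      simp only [Mset, Finset.mem_filter, Finset.mem_univ, true_and]
      exact ⟨h1, h2, h3⟩

lemma sum_valid (x : ZMod L → ℤ) (hx : IsBin L x) (r : ℝ) :
    ∑ S ∈ Finset.univ.filter (fun S => ValidS L x S), r ^ S.card
      = r ^ (Mset L x).card * (r + 1) ^ (Fset L x).card := by
  have himg : Finset.univ.filter (fun S => ValidS L x S)
      = (Fset L x).powerset.image (fun T => Mset L x ∪ T) := by
    ext S
    simp only [Finset.mem_filter, Finset.mem_univ, true_and, Finset.mem_image,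
      Finset.mem_powerset]
    constructor
    · intro hS
      rw [validS_iff x hx] at hS
      refine ⟨S \ Mset L x, ?_, ?_⟩
      · intro p hp
        rw [Finset.mem_sdiff] at hp
        have := hS.2 hp.1
        rw [Finset.mem_union] at this
        tauto
      · exact Finset.union_sdiff_of_subset hS.1
    · rintro ⟨T, hT, rfl⟩
      rw [validS_iff x hx]
      exact ⟨Finset.subset_union_left, Finset.union_subset_union_right hT⟩
  rw [himg, Finset.sum_image (by
    intro T1 h1 T2 h2 he
    rw [Finset.mem_coe, Finset.mem_powerset] at h1 h2
    dsimp only at he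
    have d1 : Disjoint (Mset L x) T1 :=
      (disjoint_Mset_Fset x).mono_right h1
    have d2 : Disjoint (Mset L x) T2 :=
      (disjoint_Mset_Fset x).mono_right h2
    rw [← Finset.union_sdiff_cancel_left d1, ← Finset.union_sdiff_cancel_left d2, he])]
  have hterm : ∀ T ∈ (Fset L x).powerset,
      r ^ (Mset L x ∪ T).card = r ^ (Mset L x).card * r ^ T.card := by
    intro T hT
    rw [Finset.mem_powerset] at hT
    rw [Finset.card_union_of_disjoint ((disjoint_Mset_Fset x).mono_right hT), pow_add]
  rw [Finset.sum_congr rfl hterm, ← Finset.mul_sum]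
  congr 1
  have hpa := Finset.prod_add (fun _ : ZMod L => r) (fun _ : ZMod L => 1) (Fset L x)
  simp only [Finset.prod_const, Finset.prod_const_one, one_pow, mul_one] at hpa
  rw [hpa]

lemma Mset_card (x : ZMod L → ℤ) : (Mset L x).card = patCount L x [0, 1, 0] := by
  rw [patCount010]
  apply Finset.card_nbij' (i := fun p => p - 1) (j := fun z => z + 1)
  · intro p hp
    simp only [Finset.mem_coe, Mset, Finset.mem_filter, Finset.mem_univ, true_and] at hp ⊢
    rw [sub_add_cancel, show p - 1 + 2 = p + 1 from by ring]
    exact hp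
  · intro z hz
    simp only [Finset.mem_coe, Mset, Finset.mem_filter, Finset.mem_univ, true_and] at hz ⊢
    rw [add_sub_cancel_right, show z + 1 + 1 = z + 2 from by ring]
    exact hz
  · intro a _; dsimp only; ring
  · intro a _; dsimp only; ring

lemma Fset_card (x : ZMod L → ℤ) (hx : IsBin L x) :
    (Fset L x).card = patCount L x [1, 1, 1, 0] := by
  classical
  rw [patCount1110]
  -- first, Fset is the set of 0111 windows
  have h0111 : (Fset L x).card = (Finset.univ.filter fun z : ZMod L =>
      x z = 0 ∧ x (z + 1) = 1 ∧ x (z + 2) = 1 ∧ x (z + 3) = 1).card := by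
    apply Finset.card_nbij' (i := fun p => p - 1) (j := fun z => z + 1)
    · intro p hp
      simp only [Finset.mem_coe, Fset, Finset.mem_filter, Finset.mem_univ, true_and] at hp ⊢
      rw [sub_add_cancel, show p - 1 + 2 = p + 1 from by ring,
        show p - 1 + 3 = p + 2 from by ring]
      exact hp
    · intro z hz
      simp only [Finset.mem_coe, Fset, Finset.mem_filter, Finset.mem_univ, true_and] at hz ⊢
      rw [add_sub_cancel_right, show z + 1 + 1 = z + 2 from by ring,
        show z + 1 + 2 = z + 3 from by ring]
      exact hz
    · intro a _; dsimp only; ring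
    · intro a _; dsimp only; ring
  rw [h0111]
  -- telescoping argument : #0111 = #1110 on the cycle
  set A := Finset.univ.filter fun z : ZMod L =>
    x z = 1 ∧ x (z + 1) = 1 ∧ x (z + 2) = 1 with hA
  set B := Finset.univ.filter fun z : ZMod L =>
    x (z + 1) = 1 ∧ x (z + 2) = 1 ∧ x (z + 3) = 1 with hB
  have hAB : A.card = B.card := by
    apply Finset.card_nbij' (i := fun z => z - 1) (j := fun z => z + 1)
    · intro z hz
      simp only [Finset.mem_coe, hA, hB, Finset.mem_filter, Finset.mem_univ, true_and] at hz ⊢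
      rw [sub_add_cancel, show z - 1 + 2 = z + 1 from by ring,
        show z - 1 + 3 = z + 2 from by ring]
      exact hz
    · intro z hz
      simp only [Finset.mem_coe, hA, hB, Finset.mem_filter, Finset.mem_univ, true_and] at hz ⊢
      rw [show z + 1 + 1 = z + 2 from by ring, show z + 1 + 2 = z + 3 from by ring]
      exact hz
    · intro a _; dsimp only; ring
    · intro a _; dsimp only; ring
  have hsplitA := Finset.card_filter_add_card_filter_not
    (s := A) (p := fun z => x (z + 3) = 1)
  have hsplitB := Finset.card_filter_add_card_filter_not
    (s := B) (p := fun z => x z = 1)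
  have hDA : A.filter (fun z => x (z + 3) = 1)
      = B.filter (fun z => x z = 1) := by
    ext z
    simp only [hA, hB, Finset.mem_filter, Finset.mem_univ, true_and]
    tauto
  have hA0 : A.filter (fun z => ¬x (z + 3) = 1)
      = Finset.univ.filter (fun z : ZMod L =>
          x z = 1 ∧ x (z + 1) = 1 ∧ x (z + 2) = 1 ∧ x (z + 3) = 0) := by
    ext z
    simp only [hA, Finset.mem_filter, Finset.mem_univ, true_and]
    rcases hx (z + 3) with h | h <;> simp [h]
  have hB0 : B.filter (fun z => ¬x z = 1)
      = Finset.univ.filter (fun z : ZMod L =>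
          x z = 0 ∧ x (z + 1) = 1 ∧ x (z + 2) = 1 ∧ x (z + 3) = 1) := by
    ext z
    simp only [hB, Finset.mem_filter, Finset.mem_univ, true_and]
    rcases hx z with h | h <;> simp [h]
  rw [hDA] at hsplitA
  rw [hA0] at hsplitA
  rw [hB0] at hsplitB
  omega

end Vsum

open scoped Classical in
/-- the key summation identity over the predecessor set B(x). -/
theorem key_summation_identity (L : ℕ) (hL : 6 ≤ L) [NeZero L] (α : ℝ)
    (hα0 : 0 < α) (hα1 : α < 1) (x : ZMod L → ℤ) (hx : IsBin L x) :
    ∑ x' ∈ (cube L).filter (fun x' => inB L x' x),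
        (α / (1 - α)) ^ (ell L x' x + patCount L x' [0, 1, 0])
      = α ^ patCount L x [0, 1, 0] /
          (1 - α) ^ (patCount L x [1, 1, 1, 0] + patCount L x [0, 1, 0]) := by
  classical
  have hr1 : (1 : ℝ) - α > 0 := by linarith
  have hr0 : (1 : ℝ) - α ≠ 0 := ne_of_gt hr1
  have hsum : ∑ x' ∈ (cube L).filter (fun x' => inB L x' x),
      (α / (1 - α)) ^ (ell L x' x + patCount L x' [0, 1, 0])
      = ∑ S ∈ Finset.univ.filter (fun S => ValidS L x S), (α / (1 - α)) ^ S.card := by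
    apply Finset.sum_nbij' (i := fun x' => Sof L x x') (j := fun S => predc L x S)
    · intro x' hmem
      rw [Finset.mem_filter] at hmem
      have h2 : IsBin L x' ∧ ∃ b : ZMod L → ℤ, IsBin L b ∧ upd L x' b = x := hmem.2
      obtain ⟨hbin, b, hb, hU⟩ := h2
      rw [Finset.mem_filter]
      exact ⟨Finset.mem_univ _, (predecessor_charac x x' b hbin hb hU).1⟩
    · intro S hS
      rw [Finset.mem_filter] at hS
      rw [Finset.mem_filter]
      refine ⟨?_, predc_isBin x hx S, fun j => if j ∈ S then 1 else 0, ?_,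
        predc_upd x hx S hS.2⟩
      · simp only [cube, Fintype.mem_piFinset, Finset.mem_insert, Finset.mem_singleton]
        exact predc_isBin x hx S
      · intro j
        dsimp only
        split_ifs <;> simp
    · intro x' hmem
      rw [Finset.mem_filter] at hmem
      have h2 : IsBin L x' ∧ ∃ b : ZMod L → ℤ, IsBin L b ∧ upd L x' b = x := hmem.2
      obtain ⟨hbin, b, hb, hU⟩ := h2
      exact (predecessor_charac x x' b hbin hb hU).2
    · intro S hS
      rw [Finset.mem_filter] at hS
      exact Sof_predc x hx S hS.2
    · intro x' hmem
      rw [Finset.mem_filter] at hmem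
      have h2 : IsBin L x' ∧ ∃ b : ZMod L → ℤ, IsBin L b ∧ upd L x' b = x := hmem.2
      obtain ⟨hbin, b, hb, hU⟩ := h2
      obtain ⟨hval, heq⟩ := predecessor_charac x x' b hbin hb hU
      have hcnt := ell_add_patCount x hx (Sof L x x') hval
      rw [heq] at hcnt
      rw [hcnt]
  rw [hsum, sum_valid x hx, Mset_card, Fset_card x hx]
  have key : α / (1 - α) + 1 = 1 / (1 - α) := by rw [div_add_one hr0]; congr 1; ring
  rw [key, div_pow, div_pow, one_pow, pow_add]
  field_simp
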